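/- In the triangle model over F₂ with the curved QLC ∇e⁺ = e⁻⊗e⁻, ∇e⁻ = e⁺⊗e⁺ (α = β = 1), the two Ricci tensors defined with the left-invariant lifts i₊(Vol) = e⁺⊗e⁻ and i₋(Vol) = e⁻⊗e⁺ are Ricci₊ = e⁻⊗e⁺ and Ricci₋ = e⁺⊗e⁻, and their sum equals the metric g = e⁺⊗e⁻ + e⁻⊗e⁺. -/

import Mathlib

/-! Over F₂ the derivatives `∂± f = R±f + f` kill constants, so on the basis 1-forms
only the zeroth-order part of `∇` survives, and the curvature is `R∇(e±) = Vol⊗e±`.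
Contracting with the inverse metric then makes `Ricci` transpose the lift:
`Ricci L (v, w) = L (w, v)`, which swaps `e⁺⊗e⁻` and `e⁻⊗e⁺`. -/

/- The triangle model over F₂ with the curved QLC ∇e⁺ = e⁻⊗e⁻, ∇e⁻ = e⁺⊗e⁺
(α = β = 1). Bases as before: `true` indexes e⁺, `false` indexes e⁻;
a 2-tensor is `c : Bool → Bool → A` with A = F₂(Z₃). -/

/-- The algebra `A = F₂(Z₃)`. -/
abbrev Alg := ZMod 3 → ZMod 2

/-- `∂± f = R±f + f`. -/
def pd (b : Bool) (f : Alg) : Alg :=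
  fun i => (if b then f (i + 1) else f (i - 1)) + f i

/-- The curved connection (`α = β = 1`) on 1-forms: `∇e⁺ = e⁻⊗e⁻`,
`∇e⁻ = e⁺⊗e⁺`, extended by the Leibniz rule. -/
def nabla1 (c : Bool → Alg) : Bool → Bool → Alg :=
  fun a b => pd a (c b) +
    (match a, b with
      | false, false => c true
      | true, true => c false
      | _, _ => 0)

/-- Its curvature `R∇ = (d⊗id + id∧∇)∇`, component `w` the coefficient of
`Vol⊗e^w` (here `R∇(e±) = Vol⊗e±`). -/
def curv (c : Bool → Alg) : Bool → Alg :=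
  fun w => pd false (nabla1 c true w) + pd true (nabla1 c false w) +
    (if w then nabla1 c false false else nabla1 c true true)

/-- Basis 1-forms `e⁺` (`true`) and `e⁻` (`false`). -/
def ebasis (s : Bool) : Bool → Alg := fun b => if b = s then 1 else 0

/-- The metric `g = e⁺⊗e⁻ + e⁻⊗e⁺`. -/
def gMet : Bool → Bool → Alg := fun a b => if a ≠ b then 1 else 0

/-- The lift `i₊(Vol) = e⁺⊗e⁻`. -/
def iPlus : Bool → Bool → Alg := fun a b => if a = true ∧ b = false then 1 else 0
/-- The lift `i₋(Vol) = e⁻⊗e⁺`. -/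
def iMinus : Bool → Bool → Alg := fun a b => if a = false ∧ b = true then 1 else 0

/-- `Ricci = ((,)⊗id)(id⊗(i⊗id)R∇)g` for a lift `i(Vol) = L`: using the
inverse metric `(e±, e∓) = 1`, `(e±, e±) = 0`, this gives component `(v,w)`
equal to `Σ_b L(b,v)·R∇(e^b)(w)`. -/
def Ricci (L : Bool → Bool → Alg) : Bool → Bool → Alg :=
  fun v w => L true v * curv (ebasis true) w + L false v * curv (ebasis false) w

lemma pd_const (b : Bool) (x : ZMod 2) : pd b (fun _ => x) = 0 := by
  funext i
  cases b <;> exact CharTwo.add_self_eq_zero x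

@[simp] lemma pd_zero (b : Bool) : pd b 0 = 0 := pd_const b 0

@[simp] lemma pd_one (b : Bool) : pd b 1 = 0 := pd_const b 1

lemma nabla1_ebasis (s : Bool) :
    nabla1 (ebasis s) = fun a b => if a = !s ∧ b = !s then 1 else 0 := by
  funext a b
  cases s <;> cases a <;> cases b <;> simp [nabla1, ebasis]

lemma curv_ebasis (s : Bool) : curv (ebasis s) = ebasis s := by
  funext w
  cases s <;> cases w <;> simp [curv, nabla1_ebasis, ebasis]

lemma Ricci_apply (L : Bool → Bool → Alg) (v w : Bool) : Ricci L v w = L w v := by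
  cases w <;> simp [Ricci, curv_ebasis, ebasis]

/-- For the curved QLC on the triangle: `Ricci₊ = e⁻⊗e⁺`, `Ricci₋ = e⁺⊗e⁻`,
and their sum is the metric `g`. -/
theorem triangle_Ricci :
    Ricci iPlus = iMinus ∧ Ricci iMinus = iPlus ∧
    Ricci iPlus + Ricci iMinus = gMet := by
  refine ⟨?_, ?_, ?_⟩ <;> funext v w <;> simp only [Pi.add_apply, Ricci_apply] <;>
    cases v <;> cases w <;> rfl
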